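/- arXiv:2509.11043 — 6 statements merged into one kernel-verified Lean document; each statement's English description precedes it below -/
import Mathlib

section
/- Let (Ω, 𝔉, P) be a probability space with a filtration (𝔉_k)_{k≥0}, and let (Y_k), (Z_k), (W_k) be sequences of nonnegative, integrable real random variables such that for every k, Y_k, Z_k and W_k are 𝔉_k-measurable, E[Y_{k+1} | 𝔉_k] ≤ Y_k − Z_k + W_k almost surely, and ∑_{k=0}^∞ W_k < ∞ almost surely. Then, almost surely, ∑_{k=0}^∞ Z_k < ∞ and the sequence (Y_k) converges to a (nonnegative) limit. -/
open MeasureTheory Filter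

/-- Robbins–Siegmund almost-supermartingale convergence lemma (Lemma 3.8 of the paper):
if nonnegative adapted integrable sequences satisfy
`E[Y_{k+1} | 𝔉_k] ≤ Y_k − Z_k + W_k` a.s. and `∑ W_k < ∞` a.s., then a.s.
`∑ Z_k < ∞` and `Y_k` converges to a nonnegative limit. -/
theorem robbins_siegmund
    {Ω : Type*} {m : MeasurableSpace Ω} {P : Measure Ω} [IsProbabilityMeasure P]
    (ℱ : Filtration ℕ m)
    (Y Z W : ℕ → Ω → ℝ)
    (hY_nonneg : ∀ k, 0 ≤ Y k) (hZ_nonneg : ∀ k, 0 ≤ Z k) (hW_nonneg : ∀ k, 0 ≤ W k)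
    (hY_int : ∀ k, Integrable (Y k) P) (hZ_int : ∀ k, Integrable (Z k) P)
    (hW_int : ∀ k, Integrable (W k) P)
    (hY_meas : ∀ k, StronglyMeasurable[ℱ k] (Y k))
    (hZ_meas : ∀ k, StronglyMeasurable[ℱ k] (Z k))
    (hW_meas : ∀ k, StronglyMeasurable[ℱ k] (W k))
    (hcond : ∀ k, ∀ᵐ ω ∂P, (P[Y (k + 1) | ℱ k]) ω ≤ Y k ω - Z k ω + W k ω)
    (hW_sum : ∀ᵐ ω ∂P, Summable fun k => W k ω) :
    ∀ᵐ ω ∂P, (Summable fun k => Z k ω) ∧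
      ∃ l : ℝ, 0 ≤ l ∧ Tendsto (fun k => Y k ω) atTop (nhds l) := by
  classical
  -- partial sums
  set S : ℕ → Ω → ℝ := fun k ω => ∑ j ∈ Finset.range k, W j ω with hSdef
  set T : ℕ → Ω → ℝ := fun k ω => ∑ j ∈ Finset.range k, Z j ω with hTdef
  set X : ℕ → Ω → ℝ := fun k ω => Y k ω + T k ω - S k ω with hXdef
  -- measurability of partial sums
  have hsum_meas : ∀ (V : ℕ → Ω → ℝ), (∀ j, StronglyMeasurable[ℱ j] (V j)) →
      ∀ n k, n ≤ k + 1 → StronglyMeasurable[ℱ k] (fun ω => ∑ j ∈ Finset.range n, V j ω) := by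
    intro V hV n k hn
    apply Finset.stronglyMeasurable_fun_sum
    intro j hj
    have hj' : j ≤ k := by
      have := Finset.mem_range.mp hj; omega
    exact (hV j).mono (ℱ.mono hj')
  have hS_meas : ∀ n k, n ≤ k + 1 → StronglyMeasurable[ℱ k] (S n) := fun n k hn =>
    hsum_meas W hW_meas n k hn
  have hT_meas : ∀ n k, n ≤ k + 1 → StronglyMeasurable[ℱ k] (T n) := fun n k hn =>
    hsum_meas Z hZ_meas n k hn
  have hS_int : ∀ n, Integrable (S n) P := fun n =>
    integrable_finset_sum _ fun j _ => hW_int j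
  have hT_int : ∀ n, Integrable (T n) P := fun n =>
    integrable_finset_sum _ fun j _ => hZ_int j
  have hX_int : ∀ n, Integrable (X n) P := fun n =>
    ((hY_int n).add (hT_int n)).sub (hS_int n)
  have hX_meas : ∀ n k, n ≤ k → StronglyMeasurable[ℱ k] (X n) := by
    intro n k hn
    exact (((hY_meas n).mono (ℱ.mono hn)).add (hT_meas n k (by omega))).sub
      (hS_meas n k (by omega))
  -- conditional expectation inequality for X
  have hcondX : ∀ k, (P[X (k + 1) | ℱ k]) ≤ᵐ[P] X k := by
    intro k
    have hXsplit : X (k + 1) = Y (k + 1) + (T (k + 1) - S (k + 1)) := by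
      funext ω
      simp only [hXdef, Pi.add_apply, Pi.sub_apply]
      ring
    have hTS_int : Integrable (T (k + 1) - S (k + 1)) P := (hT_int _).sub (hS_int _)
    have h1 : (P[X (k + 1) | ℱ k]) =ᵐ[P]
        (P[Y (k + 1) | ℱ k]) + (P[T (k + 1) - S (k + 1) | ℱ k]) := by
      rw [hXsplit]
      exact condExp_add (hY_int (k + 1)) hTS_int _
    have h2 : (P[T (k + 1) - S (k + 1) | ℱ k]) = T (k + 1) - S (k + 1) :=
      condExp_of_stronglyMeasurable (ℱ.le k)
        ((hT_meas (k + 1) k le_rfl).sub (hS_meas (k + 1) k le_rfl)) hTS_int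
    filter_upwards [h1, hcond k] with ω h1ω h2ω
    rw [h1ω, Pi.add_apply, h2]
    have hTsucc : T (k + 1) ω = T k ω + Z k ω := by
      simp [hTdef, Finset.sum_range_succ]
    have hSsucc : S (k + 1) ω = S k ω + W k ω := by
      simp [hSdef, Finset.sum_range_succ]
    simp only [Pi.sub_apply]
    simp only [hXdef]
    rw [hTsucc, hSsucc]
    linarith
  -- nonnegativity of partial sums
  have hT_nonneg : ∀ k ω, 0 ≤ T k ω := fun k ω =>
    Finset.sum_nonneg fun j _ => hZ_nonneg j ω
  have hS_mono : ∀ ω, Monotone fun n => S n ω := by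
    intro ω n1 n2 h
    exact Finset.sum_le_sum_of_subset_of_nonneg (Finset.range_subset_range.2 h)
      (fun j _ _ => hW_nonneg j ω)
  -- key step: for each truncation level a, a.e. convergence of X on the event
  -- that the partial sums of W stay below a
  have key : ∀ a : ℕ, ∀ᵐ ω ∂P, (∀ k, S (k + 1) ω ≤ a) →
      ∃ c, Tendsto (fun k => X k ω) atTop (nhds c) := by
    intro a
    set A : ℕ → Set Ω := fun k => {ω | S (k + 1) ω ≤ a} with hAdef
    have hA : ∀ k, MeasurableSet[ℱ k] (A k) := fun k =>
      measurableSet_le (hS_meas (k + 1) k le_rfl).measurable measurable_const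
    set D : ℕ → Ω → ℝ := fun k => (A k).indicator (fun ω => X (k + 1) ω - X k ω) with hDdef
    set Xa : ℕ → Ω → ℝ := fun k ω => X 0 ω + ∑ j ∈ Finset.range k, D j ω with hXadef
    have hD_int : ∀ k, Integrable (D k) P :=
      fun k => (((hX_int (k + 1)).sub (hX_int k)).indicator ((ℱ.le k) _ (hA k)))
    have hXa_int : ∀ k, Integrable (Xa k) P := by
      intro k
      exact (hX_int 0).add (integrable_finset_sum _ fun j _ => hD_int j)
    have hXa_adap : StronglyAdapted ℱ Xa := by
      intro k
      apply StronglyMeasurable.add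
      · exact (hX_meas 0 k (Nat.zero_le k))
      · apply Finset.stronglyMeasurable_fun_sum
        intro j hj
        have hj' : j + 1 ≤ k := Finset.mem_range.mp hj
        exact (((hX_meas (j + 1) (j + 1) le_rfl).sub
          (hX_meas j (j + 1) (by omega))).indicator
          ((ℱ.mono (by omega : j ≤ j + 1)) _ (hA j))).mono (ℱ.mono hj')
    have hXa_succ : ∀ k, Xa (k + 1) = Xa k + D k := by
      intro k
      funext ω
      simp only [hXadef, Pi.add_apply, Finset.sum_range_succ]
      ring
    have hsuper : Supermartingale Xa ℱ P := by
      refine supermartingale_nat hXa_adap hXa_int ?_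
      intro k
      rw [hXa_succ k]
      have hc1 : (P[Xa k + D k | ℱ k]) =ᵐ[P] (P[Xa k | ℱ k]) + (P[D k | ℱ k]) :=
        condExp_add (hXa_int k) (hD_int k) _
      have hc2 : (P[Xa k | ℱ k]) = Xa k :=
        condExp_of_stronglyMeasurable (ℱ.le k) (hXa_adap k) (hXa_int k)
      have hc3 : (P[D k | ℱ k]) =ᵐ[P]
          (A k).indicator (P[fun ω => X (k + 1) ω - X k ω | ℱ k]) :=
        condExp_indicator ((hX_int (k + 1)).sub (hX_int k)) (hA k)
      have hc4 : (P[fun ω => X (k + 1) ω - X k ω | ℱ k]) =ᵐ[P]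
          (P[X (k + 1) | ℱ k]) - (P[X k | ℱ k]) :=
        condExp_sub (hX_int (k + 1)) (hX_int k) _
      have hc5 : (P[X k | ℱ k]) = X k :=
        condExp_of_stronglyMeasurable (ℱ.le k) (hX_meas k k le_rfl) (hX_int k)
      filter_upwards [hc1, hc3, hc4.mono (fun ω h => h), hcondX k] with ω h1 h3 h4 h5
      rw [h1, Pi.add_apply, hc2, h3]
      have hind : (A k).indicator (P[fun ω => X (k + 1) ω - X k ω | ℱ k]) ω ≤ 0 := by
        by_cases hmem : ω ∈ A k
        · rw [Set.indicator_of_mem hmem, h4, Pi.sub_apply, hc5]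
          linarith
        · rw [Set.indicator_of_notMem hmem]
      linarith
    -- pointwise identities and lower bound
    have hfull : ∀ k ω, (∀ j, j < k → ω ∈ A j) → Xa k ω = X k ω := by
      intro k
      induction k with
      | zero => intro ω _; simp [hXadef]
      | succ k ih =>
        intro ω hω
        have h1 : Xa (k + 1) ω = Xa k ω + D k ω := by rw [hXa_succ k]; rfl
        rw [h1, ih ω (fun j hj => hω j (by omega)),
          hDdef]
        simp only
        rw [Set.indicator_of_mem (hω k (by omega))]
        ring
    have hlb : ∀ k ω, -(a : ℝ) ≤ Xa k ω := by
      have hXlb : ∀ n ω, S n ω ≤ a → -(a : ℝ) ≤ X n ω := by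
        intro n ω h
        have h1 : (0:ℝ) ≤ Y n ω := hY_nonneg n ω
        have h2 : (0:ℝ) ≤ T n ω := hT_nonneg n ω
        simp only [hXdef]
        linarith
      have claim : ∀ k ω, ∃ n, Xa k ω = X n ω ∧ S n ω ≤ a := by
        intro k
        induction k with
        | zero =>
          intro ω
          refine ⟨0, by simp [hXadef], ?_⟩
          have : S 0 ω = 0 := by simp [hSdef]
          rw [this]
          exact Nat.cast_nonneg a
        | succ k ih =>
          intro ω
          by_cases hmem : ω ∈ A k
          · refine ⟨k + 1, ?_, hmem⟩
            apply hfull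
            intro j hj
            have : S (j + 1) ω ≤ S (k + 1) ω := hS_mono ω (by omega)
            exact le_trans this hmem
          · obtain ⟨n, hn1, hn2⟩ := ih ω
            refine ⟨n, ?_, hn2⟩
            have h1 : Xa (k + 1) ω = Xa k ω + D k ω := by rw [hXa_succ k]; rfl
            rw [h1, hDdef]
            simp only
            rw [Set.indicator_of_notMem hmem, hn1]
            ring
      intro k ω
      obtain ⟨n, hn1, hn2⟩ := claim k ω
      rw [hn1]
      exact hXlb n ω hn2
    -- L¹ boundedness
    have hXa0 : Xa 0 = Y 0 := by
      funext ω
      simp [hXadef, hXdef, hSdef, hTdef]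
    have hint_le : ∀ n, ∫ ω, Xa n ω ∂P ≤ ∫ ω, Y 0 ω ∂P := by
      intro n
      have := hsuper.setIntegral_le (Nat.zero_le n) (MeasurableSet.univ)
      rw [setIntegral_univ, setIntegral_univ, hXa0] at this
      exact this
    have hbdd : ∀ n, eLpNorm ((-Xa) n) 1 P ≤
        ENNReal.ofReal ((∫ ω, Y 0 ω ∂P) + 2 * a) := by
      intro n
      have habs : ∫ ω, ‖Xa n ω‖ ∂P ≤ (∫ ω, Y 0 ω ∂P) + 2 * a := by
        have h1 : ∫ ω, ‖Xa n ω‖ ∂P ≤ ∫ ω, (Xa n ω + 2 * a) ∂P := by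
          apply integral_mono (hXa_int n).norm ((hXa_int n).add (integrable_const _))
          intro ω
          have := hlb n ω
          have ha0 : (0 : ℝ) ≤ a := Nat.cast_nonneg a
          show ‖Xa n ω‖ ≤ Xa n ω + 2 * a
          rw [Real.norm_eq_abs, abs_le]
          constructor <;> linarith
        rw [integral_add (hXa_int n) (integrable_const _), integral_const,
          probReal_univ] at h1
        simp only [ENNReal.toReal_one, smul_eq_mul, one_mul] at h1
        linarith [hint_le n]
      have heq : eLpNorm ((-Xa) n) 1 P = ENNReal.ofReal (∫ ω, ‖Xa n ω‖ ∂P) := by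
        have : (-Xa) n = -(Xa n) := rfl
        rw [this, eLpNorm_neg, eLpNorm_one_eq_lintegral_enorm,
          ← ofReal_integral_norm_eq_lintegral_enorm (hXa_int n)]
      rw [heq]
      exact ENNReal.ofReal_le_ofReal habs
    have hconv := hsuper.neg.exists_ae_tendsto_of_bdd hbdd
    filter_upwards [hconv] with ω hω hbound
    obtain ⟨c, hc⟩ := hω
    refine ⟨-c, ?_⟩
    have h1 : Tendsto (fun n => Xa n ω) atTop (nhds (-c)) := by
      have := hc.neg
      convert this using 1
      funext n
      simp
    have h2 : ∀ k, Xa k ω = X k ω := by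
      intro k
      apply hfull
      intro j _
      exact hbound j
    exact h1.congr (fun k => h2 k)
  -- combine over all a : ℕ
  rw [← ae_all_iff] at key
  filter_upwards [hW_sum, key] with ω hW hkey
  set tW : ℝ := ∑' k, W k ω with htW
  obtain ⟨c, hc⟩ := by
    refine hkey ⌈tW⌉₊ ?_
    intro k
    calc S (k + 1) ω ≤ tW :=
          hW.sum_le_tsum (Finset.range (k + 1)) (fun i _ => hW_nonneg i ω)
      _ ≤ ⌈tW⌉₊ := Nat.le_ceil tW
  have hStend : Tendsto (fun k => S k ω) atTop (nhds tW) := hW.hasSum.tendsto_sum_nat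
  have hYT : Tendsto (fun k => Y k ω + T k ω) atTop (nhds (c + tW)) := by
    have := hc.add hStend
    apply this.congr
    intro k
    simp only [hXdef]
    ring
  obtain ⟨M, hM⟩ := hYT.bddAbove_range
  have hZsum : Summable fun k => Z k ω := by
    apply summable_of_sum_range_le (c := M) (fun k => hZ_nonneg k ω)
    intro n
    have h1 : T n ω ≤ Y n ω + T n ω := le_add_of_nonneg_left (hY_nonneg n ω)
    exact le_trans h1 (hM ⟨n, rfl⟩)
  have hTtend : Tendsto (fun k => T k ω) atTop (nhds (∑' k, Z k ω)) :=
    hZsum.hasSum.tendsto_sum_nat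
  have hYtend : Tendsto (fun k => Y k ω) atTop (nhds (c + tW - ∑' k, Z k ω)) := by
    have := hYT.sub hTtend
    apply this.congr
    intro k
    ring
  refine ⟨hZsum, c + tW - ∑' k, Z k ω, ?_, hYtend⟩
  exact ge_of_tendsto' hYtend (fun k => hY_nonneg k ω)
end

section
/- Let (Ω, 𝔉, P) be a probability space, 𝒢 ⊆ 𝔉 a sub-σ-algebra, d ∈ ℕ, L > 0, σ > 0 and θ ∈ [0,1]. Let x, x′, d′ : Ω → ℝ^d be 𝒢-measurable square-integrable random vectors, let G : ℝ^d → ℝ^d be measurable, and let μ, ν : Ω → ℝ^d be square-integrable random vectors satisfying: (i) E[μ | 𝒢] = G(x) and E[ν | 𝒢] = G(x′) almost surely; (ii) ‖μ − ν‖ ≤ L‖x − x′‖ almost surely; (iii) ‖G(x) − G(x′)‖ ≤ L‖x − x′‖ almost surely; (iv) ‖ν − G(x′)‖ ≤ σ almost surely. Then, almost surely, E[ ‖μ + (1−θ)(d′ − ν) − G(x)‖² | 𝒢 ] ≤ ‖d′ − G(x′)‖² + 4L²‖x − x′‖² + 2θ²σ². -/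
open MeasureTheory RealInnerProductSpace

section Helpers

variable {Ω : Type*} {𝒢 m : MeasurableSpace Ω} {P : Measure Ω} [IsProbabilityMeasure P]

lemma vre_integrable_mul {f g : Ω → ℝ} (hf : MemLp f 2 P) (hg : MemLp g 2 P) :
    Integrable (fun ω => f ω * g ω) P := by
  have h : MemLp (g • f) 1 P :=
    hf.smul hg
  rw [memLp_one_iff_integrable] at h
  exact h.congr (Filter.Eventually.of_forall fun ω => by simp [mul_comm])

lemma vre_integrable_sq_norm {E : Type*} [NormedAddCommGroup E] {f : Ω → E}
    (hf : MemLp f 2 P) : Integrable (fun ω => ‖f ω‖ ^ 2) P := by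
  have h := hf.integrable_norm_rpow two_ne_zero ENNReal.ofNat_ne_top
  refine h.congr (Filter.Eventually.of_forall fun ω => ?_)
  simp only [ENNReal.toReal_ofNat]
  rw [show (2:ℝ) = ((2:ℕ):ℝ) by norm_num, Real.rpow_natCast]

lemma vre_condexp_clm_zero (h𝒢 : 𝒢 ≤ m)
    {E F : Type*} [NormedAddCommGroup E] [NormedSpace ℝ E] [CompleteSpace E]
    [NormedAddCommGroup F] [NormedSpace ℝ F] [CompleteSpace F]
    (T : E →L[ℝ] F) {B : Ω → E} (hB : Integrable B P)
    (h : P[B|𝒢] =ᵐ[P] 0) : P[fun ω => T (B ω)|𝒢] =ᵐ[P] 0 := by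
  have hTB : Integrable (fun ω => T (B ω)) P := T.integrable_comp hB
  refine (ae_eq_condExp_of_forall_setIntegral_eq h𝒢 hTB ?_ ?_ ?_).symm
  · exact fun s _ _ => (integrable_zero _ _ _).integrableOn
  · intro s hs _
    have h2 : ∫ ω in s, B ω ∂P = 0 := by
      rw [← setIntegral_condExp h𝒢 hB hs]
      rw [setIntegral_congr_ae (h𝒢 s hs) (h.mono fun ω hω _ => hω)]
      simp
    have h1 : ∫ ω in s, T (B ω) ∂P = T (∫ ω in s, B ω ∂P) :=
      T.integral_comp_comm hB.integrableOn
    simp [h1, h2]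
  · exact stronglyMeasurable_const.aestronglyMeasurable

lemma vre_condexp_inner_zero (h𝒢 : 𝒢 ≤ m) {d : ℕ}
    {A B : Ω → EuclideanSpace ℝ (Fin d)}
    (hA : StronglyMeasurable[𝒢] A) (hA2 : MemLp A 2 P) (hB2 : MemLp B 2 P)
    (hB0 : P[B|𝒢] =ᵐ[P] 0) :
    P[fun ω => ⟪A ω, B ω⟫ | 𝒢] =ᵐ[P] 0 := by
  have hkey : (fun ω => ⟪A ω, B ω⟫) = fun ω => ∑ i, A ω i * B ω i := by
    funext ω
    simp [PiLp.inner_apply, RCLike.inner_apply, mul_comm]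
  rw [hkey]
  have hAi : ∀ i, MemLp (fun ω => A ω i) 2 P := fun i =>
    ((EuclideanSpace.proj i : EuclideanSpace ℝ (Fin d) →L[ℝ] ℝ).comp_memLp' hA2)
  have hBi : ∀ i, MemLp (fun ω => B ω i) 2 P := fun i =>
    ((EuclideanSpace.proj i : EuclideanSpace ℝ (Fin d) →L[ℝ] ℝ).comp_memLp' hB2)
  have hterm : ∀ i : Fin d, P[fun ω => A ω i * B ω i | 𝒢] =ᵐ[P] 0 := by
    intro i
    have hAmi : StronglyMeasurable[𝒢] fun ω => A ω i :=
      (EuclideanSpace.proj i :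
        EuclideanSpace ℝ (Fin d) →L[ℝ] ℝ).continuous.comp_stronglyMeasurable hA
    have hmul : Integrable (fun ω => A ω i * B ω i) P :=
      vre_integrable_mul (hAi i) (hBi i)
    have hBint : Integrable (fun ω => B ω i) P := (hBi i).integrable one_le_two
    have hB0i : P[fun ω => B ω i | 𝒢] =ᵐ[P] 0 := by
      have := vre_condexp_clm_zero h𝒢
        (EuclideanSpace.proj i : EuclideanSpace ℝ (Fin d) →L[ℝ] ℝ)
        (hB2.integrable one_le_two) hB0
      simpa using this
    have hmul' := condExp_mul_of_stronglyMeasurable_left hAmi hmul hBint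
    refine hmul'.trans ?_
    filter_upwards [hB0i] with ω hω
    simp [hω]
  have hsum : P[fun ω => ∑ i, A ω i * B ω i | 𝒢] =ᵐ[P]
      fun ω => ∑ i : Fin d, (P[fun ω' => A ω' i * B ω' i | 𝒢]) ω := by
    have := condExp_finsetSum (μ := P) (m := 𝒢) (s := Finset.univ)
      (f := fun (i : Fin d) (ω : Ω) => A ω i * B ω i)
      (fun i _ => vre_integrable_mul (hAi i) (hBi i))
    refine (condExp_congr_ae (Filter.Eventually.of_forall fun ω => by simp) : _).trans
      (this.trans ?_)
    filter_upwards with ω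
    simp
  refine hsum.trans ?_
  have : ∀ᵐ ω ∂P, ∀ i : Fin d, (P[fun ω' => A ω' i * B ω' i | 𝒢]) ω = 0 := by
    rw [MeasureTheory.ae_all_iff]
    intro i; exact hterm i
  filter_upwards [this] with ω hω
  simp [hω]

lemma vre_condexp_norm_add_sq (h𝒢 : 𝒢 ≤ m) {d : ℕ} {A B : Ω → EuclideanSpace ℝ (Fin d)}
    (hA : StronglyMeasurable[𝒢] A) (hA2 : MemLp A 2 P) (hB2 : MemLp B 2 P)
    (hB0 : P[B|𝒢] =ᵐ[P] 0) :
    P[fun ω => ‖A ω + B ω‖ ^ 2 | 𝒢] =ᵐ[P]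
      fun ω => ‖A ω‖ ^ 2 + (P[fun ω' => ‖B ω'‖ ^ 2 | 𝒢]) ω := by
  have hiA : Integrable (fun ω => ‖A ω‖ ^ 2) P := vre_integrable_sq_norm hA2
  have hiB : Integrable (fun ω => ‖B ω‖ ^ 2) P := vre_integrable_sq_norm hB2
  have hinner : Integrable (fun ω => ⟪A ω, B ω⟫) P := by
    refine (vre_integrable_mul hA2.norm hB2.norm).mono'
      (hA2.1.inner hB2.1) (Filter.Eventually.of_forall fun ω => ?_)
    simpa using abs_real_inner_le_norm (A ω) (B ω)
  have hinner2 : Integrable (fun ω => (2:ℝ) * ⟪A ω, B ω⟫) P := hinner.const_mul 2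
  have e : (fun ω => ‖A ω + B ω‖ ^ 2) =
      (fun ω => ‖A ω‖ ^ 2) + ((fun ω => (2:ℝ) * ⟪A ω, B ω⟫) + fun ω => ‖B ω‖ ^ 2) := by
    funext ω
    simp only [Pi.add_apply]
    rw [norm_add_sq_real]; ring
  rw [e]
  have h1 := condExp_add (μ := P) (m := 𝒢) hiA (hinner2.add hiB)
  have h2 := condExp_add (μ := P) (m := 𝒢) hinner2 hiB
  have hAce : P[(fun ω => ‖A ω‖ ^ 2)|𝒢] = fun ω => ‖A ω‖ ^ 2 := by
    refine condExp_of_stronglyMeasurable h𝒢 ?_ hiA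
    have := hA.norm.mul hA.norm
    simp only [pow_two]; exact this
  have h2i : P[(fun ω => (2:ℝ) * ⟪A ω, B ω⟫)|𝒢] =ᵐ[P] 0 := by
    have hs := condExp_smul (μ := P) (m := 𝒢) (2:ℝ) (fun ω => ⟪A ω, B ω⟫)
    have hz := vre_condexp_inner_zero h𝒢 hA hA2 hB2 hB0
    refine Filter.EventuallyEq.trans ?_ ((hs.trans ?_))
    · exact condExp_congr_ae (Filter.Eventually.of_forall fun ω => by simp [smul_eq_mul])
    · filter_upwards [hz] with ω hω
      have h0 : (P[fun ω => ⟪A ω, B ω⟫|𝒢]) ω = 0 := by simpa using hω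
      simp only [Pi.smul_apply, Pi.zero_apply, h0, smul_zero]
  refine h1.trans ?_
  filter_upwards [h2, h2i] with ω hω2 hωi
  simp only [Pi.add_apply, hω2, hωi, hAce, Pi.zero_apply, zero_add]

end Helpers

set_option maxHeartbeats 1000000 in
/-- Core estimate of Lemma 3.9 of the paper: conditional mean-squared error bound for
the momentum-type variance-reduced gradient estimator `μ + (1−θ)(d′ − ν)`. -/
theorem variance_reduced_estimator_bound
    {Ω : Type*} {m : MeasurableSpace Ω} {P : Measure Ω} [IsProbabilityMeasure P]
    {𝒢 : MeasurableSpace Ω} (h𝒢 : 𝒢 ≤ m)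
    (d : ℕ) (L σ θ : ℝ) (hL : 0 < L) (hσ : 0 < σ) (hθ : θ ∈ Set.Icc (0 : ℝ) 1)
    (x x' d' : Ω → EuclideanSpace ℝ (Fin d))
    (hx_meas : StronglyMeasurable[𝒢] x)
    (hx'_meas : StronglyMeasurable[𝒢] x')
    (hd'_meas : StronglyMeasurable[𝒢] d')
    (hx_L2 : MemLp x 2 P) (hx'_L2 : MemLp x' 2 P) (hd'_L2 : MemLp d' 2 P)
    (G : EuclideanSpace ℝ (Fin d) → EuclideanSpace ℝ (Fin d)) (hG : Measurable G)
    (μ ν : Ω → EuclideanSpace ℝ (Fin d))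
    (hμ_L2 : MemLp μ 2 P) (hν_L2 : MemLp ν 2 P)
    (hμ_cond : P[μ | 𝒢] =ᵐ[P] fun ω => G (x ω))
    (hν_cond : P[ν | 𝒢] =ᵐ[P] fun ω => G (x' ω))
    (hμν_lip : ∀ᵐ ω ∂P, ‖μ ω - ν ω‖ ≤ L * ‖x ω - x' ω‖)
    (hG_lip : ∀ᵐ ω ∂P, ‖G (x ω) - G (x' ω)‖ ≤ L * ‖x ω - x' ω‖)
    (hν_bdd : ∀ᵐ ω ∂P, ‖ν ω - G (x' ω)‖ ≤ σ) :
    ∀ᵐ ω ∂P,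
      (P[fun ω' => ‖μ ω' + (1 - θ) • (d' ω' - ν ω') - G (x ω')‖ ^ 2 | 𝒢]) ω ≤
        ‖d' ω - G (x' ω)‖ ^ 2 + 4 * L ^ 2 * ‖x ω - x' ω‖ ^ 2 + 2 * θ ^ 2 * σ ^ 2 := by
  obtain ⟨hθ0, hθ1⟩ := hθ
  -- measurability of G ∘ x, G ∘ x'
  have hGx_sm : StronglyMeasurable[𝒢] (fun ω => G (x ω)) :=
    (hG.comp hx_meas.measurable).stronglyMeasurable
  have hGx'_sm : StronglyMeasurable[𝒢] (fun ω => G (x' ω)) :=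
    (hG.comp hx'_meas.measurable).stronglyMeasurable
  -- L² facts
  have hD_L2 : MemLp (fun ω => ν ω - G (x' ω)) 2 P :=
    MemLp.of_bound (hν_L2.1.sub ((hGx'_sm.mono h𝒢).aestronglyMeasurable)) σ hν_bdd
  have hGx'_L2 : MemLp (fun ω => G (x' ω)) 2 P := by
    refine MemLp.ae_eq (Filter.Eventually.of_forall fun ω => ?_) (hν_L2.sub hD_L2)
    show ν ω - (ν ω - G (x' ω)) = G (x' ω)
    abel
  have hGdiff_L2 : MemLp (fun ω => G (x ω) - G (x' ω)) 2 P := by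
    refine MemLp.of_le ((hx_L2.sub hx'_L2).const_smul L)
      ((hGx_sm.mono h𝒢).aestronglyMeasurable.sub (hGx'_sm.mono h𝒢).aestronglyMeasurable) ?_
    filter_upwards [hG_lip] with ω hω
    show _ ≤ ‖(L • (x - x')) ω‖
    simp only [Pi.smul_apply, Pi.sub_apply, norm_smul, Real.norm_eq_abs, abs_of_pos hL]
    exact hω
  have hGx_L2 : MemLp (fun ω => G (x ω)) 2 P := by
    refine MemLp.ae_eq (Filter.Eventually.of_forall fun ω => ?_) (hGx'_L2.add hGdiff_L2)
    show G (x' ω) + (G (x ω) - G (x' ω)) = G (x ω)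
    abel
  have hA_L2 : MemLp (fun ω => (1 - θ) • (d' ω - G (x' ω))) 2 P :=
    (hd'_L2.sub hGx'_L2).const_smul (1 - θ)
  have hA_sm : StronglyMeasurable[𝒢] (fun ω => (1 - θ) • (d' ω - G (x' ω))) :=
    (hd'_meas.sub hGx'_sm).const_smul (1 - θ)
  have hC_L2 : MemLp (fun ω => μ ω - ν ω - (G (x ω) - G (x' ω))) 2 P :=
    (hμ_L2.sub hν_L2).sub hGdiff_L2
  have hB_L2 : MemLp
      (fun ω => μ ω - ν ω - (G (x ω) - G (x' ω)) + θ • (ν ω - G (x' ω))) 2 P :=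
    hC_L2.add (hD_L2.const_smul θ)
  -- conditional expectation zero facts
  have hμ0 : P[fun ω => μ ω - G (x ω) | 𝒢] =ᵐ[P] 0 := by
    have hsub := condExp_sub (μ := P) (m := 𝒢) (hμ_L2.integrable one_le_two)
      (hGx_L2.integrable one_le_two)
    have hce : P[(fun ω => G (x ω))|𝒢] = fun ω => G (x ω) :=
      condExp_of_stronglyMeasurable h𝒢 hGx_sm (hGx_L2.integrable one_le_two)
    refine hsub.trans ?_
    filter_upwards [hμ_cond] with ω hω
    simp [hω, hce]
  have hν0 : P[fun ω => ν ω - G (x' ω) | 𝒢] =ᵐ[P] 0 := by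
    have hsub := condExp_sub (μ := P) (m := 𝒢) (hν_L2.integrable one_le_two)
      (hGx'_L2.integrable one_le_two)
    have hce : P[(fun ω => G (x' ω))|𝒢] = fun ω => G (x' ω) :=
      condExp_of_stronglyMeasurable h𝒢 hGx'_sm (hGx'_L2.integrable one_le_two)
    refine hsub.trans ?_
    filter_upwards [hν_cond] with ω hω
    simp [hω, hce]
  have hC0 : P[fun ω => μ ω - ν ω - (G (x ω) - G (x' ω)) | 𝒢] =ᵐ[P] 0 := by
    have e : (fun ω => μ ω - ν ω - (G (x ω) - G (x' ω))) =
        fun ω => (μ ω - G (x ω)) - (ν ω - G (x' ω)) := by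
      funext ω; abel
    rw [e]
    have hsub := condExp_sub (μ := P) (m := 𝒢)
      ((hμ_L2.sub hGx_L2).integrable one_le_two) (hD_L2.integrable one_le_two)
    refine hsub.trans ?_
    filter_upwards [hμ0, hν0] with ω h1 h2
    have h1' : (P[fun ω => μ ω - G (x ω)|𝒢]) ω = 0 := by simpa using h1
    have h2' : (P[fun ω => ν ω - G (x' ω)|𝒢]) ω = 0 := by simpa using h2
    have h1'' : (P[μ - fun ω => G (x ω)|𝒢]) ω = 0 := h1'
    simp [Pi.sub_apply, h1'', h2']
  have hB0 : P[fun ω => μ ω - ν ω - (G (x ω) - G (x' ω)) + θ • (ν ω - G (x' ω)) | 𝒢]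
      =ᵐ[P] 0 := by
    have hadd := condExp_add (μ := P) (m := 𝒢) (hC_L2.integrable one_le_two)
      ((hD_L2.const_smul θ).integrable one_le_two)
    have hsmul := condExp_smul (μ := P) (m := 𝒢) θ (fun ω => ν ω - G (x' ω))
    refine hadd.trans ?_
    filter_upwards [hC0, hν0, hsmul] with ω h1 h2 h3
    have h1' : (P[fun ω => μ ω - ν ω - (G (x ω) - G (x' ω))|𝒢]) ω = 0 := by simpa using h1
    have h2' : (P[fun ω => ν ω - G (x' ω)|𝒢]) ω = 0 := by simpa using h2
    simp only [Pi.add_apply, Pi.zero_apply, h1', zero_add]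
    rw [h3]
    simp [Pi.smul_apply, h2']
  -- first orthogonality step
  have hkey : (fun ω' => μ ω' + (1 - θ) • (d' ω' - ν ω') - G (x ω')) =
      fun ω => (1 - θ) • (d' ω - G (x' ω)) +
        (μ ω - ν ω - (G (x ω) - G (x' ω)) + θ • (ν ω - G (x' ω))) := by
    funext ω
    module
  have horth := vre_condexp_norm_add_sq h𝒢 hA_sm hA_L2 hB_L2 hB0
  have hmain : P[fun ω' => ‖μ ω' + (1 - θ) • (d' ω' - ν ω') - G (x ω')‖ ^ 2 | 𝒢] =ᵐ[P]
      fun ω => ‖(1 - θ) • (d' ω - G (x' ω))‖ ^ 2 +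
        (P[fun ω' => ‖μ ω' - ν ω' - (G (x ω') - G (x' ω')) + θ • (ν ω' - G (x' ω'))‖ ^ 2
          | 𝒢]) ω := by
    refine Filter.EventuallyEq.trans ?_ horth
    refine condExp_congr_ae (Filter.Eventually.of_forall fun ω => ?_)
    exact congrArg (fun z => ‖z‖ ^ 2) (congrFun hkey ω)
  -- second orthogonality step
  have hGdiff_sm : StronglyMeasurable[𝒢] (fun ω => G (x ω) - G (x' ω)) :=
    hGx_sm.sub hGx'_sm
  have horth2 := vre_condexp_norm_add_sq h𝒢 hGdiff_sm hGdiff_L2 hC_L2 hC0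
  have hmain2 : P[fun ω' => ‖μ ω' - ν ω'‖ ^ 2 | 𝒢] =ᵐ[P]
      fun ω => ‖G (x ω) - G (x' ω)‖ ^ 2 +
        (P[fun ω' => ‖μ ω' - ν ω' - (G (x ω') - G (x' ω'))‖ ^ 2 | 𝒢]) ω := by
    refine Filter.EventuallyEq.trans ?_ horth2
    refine condExp_congr_ae (Filter.Eventually.of_forall fun ω => ?_)
    exact congrArg (fun z => ‖z‖ ^ 2)
      (show μ ω - ν ω =
        G (x ω) - G (x' ω) + (μ ω - ν ω - (G (x ω) - G (x' ω))) by abel)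
  -- bound on conditional expectation of ‖μ - ν‖²
  have hμν_le : P[fun ω' => ‖μ ω' - ν ω'‖ ^ 2 | 𝒢] ≤ᵐ[P]
      fun ω => L ^ 2 * ‖x ω - x' ω‖ ^ 2 := by
    have hg_int : Integrable (fun ω => L ^ 2 * ‖x ω - x' ω‖ ^ 2) P :=
      (vre_integrable_sq_norm (hx_L2.sub hx'_L2)).const_mul (L ^ 2)
    have hg_sm : StronglyMeasurable[𝒢] (fun ω => L ^ 2 * ‖x ω - x' ω‖ ^ 2) := by
      have h1 := (hx_meas.sub hx'_meas).norm
      have h2 := (stronglyMeasurable_const (b := L ^ 2)).mul (h1.mul h1)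
      have e : (fun ω => L ^ 2 * ‖x ω - x' ω‖ ^ 2) =
          fun ω => L ^ 2 * (‖(x - x') ω‖ * ‖(x - x') ω‖) := by
        funext ω; rw [Pi.sub_apply]; ring
      rw [e]; exact h2
    have hmono := condExp_mono (μ := P) (m := 𝒢)
      (vre_integrable_sq_norm (hμ_L2.sub hν_L2)) hg_int ?_
    · have hce : P[(fun ω => L ^ 2 * ‖x ω - x' ω‖ ^ 2)|𝒢] =
          fun ω => L ^ 2 * ‖x ω - x' ω‖ ^ 2 :=
        condExp_of_stronglyMeasurable h𝒢 hg_sm hg_int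
      filter_upwards [hmono] with ω hω
      calc (P[fun ω' => ‖μ ω' - ν ω'‖ ^ 2|𝒢]) ω
          ≤ (P[fun ω => L ^ 2 * ‖x ω - x' ω‖ ^ 2|𝒢]) ω := hω
        _ = L ^ 2 * ‖x ω - x' ω‖ ^ 2 := by rw [hce]
    · filter_upwards [hμν_lip] with ω hω
      have h0 : (0:ℝ) ≤ ‖μ ω - ν ω‖ := norm_nonneg _
      have h1 : (0:ℝ) ≤ ‖x ω - x' ω‖ := norm_nonneg _
      simp only [Pi.sub_apply]
      nlinarith
  -- bound on conditional expectation of ‖B‖²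
  have hB_le : P[fun ω' => ‖μ ω' - ν ω' - (G (x ω') - G (x' ω')) + θ • (ν ω' - G (x' ω'))‖ ^ 2
      | 𝒢] ≤ᵐ[P]
      fun ω => 2 * (P[fun ω' => ‖μ ω' - ν ω' - (G (x ω') - G (x' ω'))‖ ^ 2 | 𝒢]) ω
        + 2 * θ ^ 2 * σ ^ 2 := by
    have hCint : Integrable (fun ω => ‖μ ω - ν ω - (G (x ω) - G (x' ω))‖ ^ 2) P :=
      vre_integrable_sq_norm hC_L2
    have hg_int : Integrable
        (fun ω => 2 * ‖μ ω - ν ω - (G (x ω) - G (x' ω))‖ ^ 2 + 2 * θ ^ 2 * σ ^ 2) P :=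
      (hCint.const_mul 2).add (integrable_const _)
    have hmono := condExp_mono (μ := P) (m := 𝒢) (vre_integrable_sq_norm hB_L2) hg_int ?_
    · have hadd := condExp_add (μ := P) (m := 𝒢) (hCint.const_mul 2)
        (integrable_const (2 * θ ^ 2 * σ ^ 2))
      have hsmul := condExp_smul (μ := P) (m := 𝒢) (2:ℝ)
        (fun ω => ‖μ ω - ν ω - (G (x ω) - G (x' ω))‖ ^ 2)
      have hconst := condExp_const (μ := P) h𝒢 (2 * θ ^ 2 * σ ^ 2)
      filter_upwards [hmono, hadd, hsmul] with ω h1 h2 h3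
      refine h1.trans ?_
      have h2'' : (P[fun ω =>
            2 * ‖μ ω - ν ω - (G (x ω) - G (x' ω))‖ ^ 2 + 2 * θ ^ 2 * σ ^ 2|𝒢]) ω
          = (P[fun ω => 2 * ‖μ ω - ν ω - (G (x ω) - G (x' ω))‖ ^ 2|𝒢]) ω
            + (P[fun _ : Ω => 2 * θ ^ 2 * σ ^ 2|𝒢]) ω := h2
      have h3'' : (P[fun ω => 2 * ‖μ ω - ν ω - (G (x ω) - G (x' ω))‖ ^ 2|𝒢]) ω
          = 2 * (P[fun ω' => ‖μ ω' - ν ω' - (G (x ω') - G (x' ω'))‖ ^ 2|𝒢]) ω := by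
        simpa [smul_eq_mul, Pi.smul_def] using h3
      have hcc : (P[fun _ : Ω => 2 * θ ^ 2 * σ ^ 2|𝒢]) ω = 2 * θ ^ 2 * σ ^ 2 := by
        rw [hconst]
      rw [h2'', h3'', hcc]
    · filter_upwards [hν_bdd] with ω hω
      have hCn : (0:ℝ) ≤ ‖μ ω - ν ω - (G (x ω) - G (x' ω))‖ := norm_nonneg _
      have hDn : (0:ℝ) ≤ ‖ν ω - G (x' ω)‖ := norm_nonneg _
      have htri : ‖μ ω - ν ω - (G (x ω) - G (x' ω)) + θ • (ν ω - G (x' ω))‖ ≤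
          ‖μ ω - ν ω - (G (x ω) - G (x' ω))‖ + θ * ‖ν ω - G (x' ω)‖ := by
        refine (norm_add_le _ _).trans ?_
        rw [norm_smul, Real.norm_eq_abs, abs_of_nonneg hθ0]
      have hBn : (0:ℝ) ≤ ‖μ ω - ν ω - (G (x ω) - G (x' ω)) + θ • (ν ω - G (x' ω))‖ :=
        norm_nonneg _
      have e1 : ‖μ ω - ν ω - (G (x ω) - G (x' ω)) + θ • (ν ω - G (x' ω))‖ ^ 2 ≤
          (‖μ ω - ν ω - (G (x ω) - G (x' ω))‖ + θ * ‖ν ω - G (x' ω)‖) ^ 2 :=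
        pow_le_pow_left₀ hBn htri 2
      have e2 : θ * ‖ν ω - G (x' ω)‖ ≤ θ * σ := mul_le_mul_of_nonneg_left hω hθ0
      have e3 : (θ * ‖ν ω - G (x' ω)‖) ^ 2 ≤ (θ * σ) ^ 2 := by
        have := mul_self_le_mul_self (mul_nonneg hθ0 hDn) e2
        simpa [pow_two] using this
      nlinarith [sq_nonneg (‖μ ω - ν ω - (G (x ω) - G (x' ω))‖ - θ * ‖ν ω - G (x' ω)‖),
        e1, e3]
  -- final assembly
  filter_upwards [hmain, hmain2, hμν_le, hB_le] with ω h1 h2 h3 h4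
  rw [h1]
  have hA_norm : ‖(1 - θ) • (d' ω - G (x' ω))‖ ^ 2 = (1 - θ) ^ 2 * ‖d' ω - G (x' ω)‖ ^ 2 := by
    rw [norm_smul, Real.norm_eq_abs, mul_pow, sq_abs]
  have hCpos : (0:ℝ) ≤ ‖G (x ω) - G (x' ω)‖ ^ 2 := sq_nonneg _
  have hC_le : (P[fun ω' => ‖μ ω' - ν ω' - (G (x ω') - G (x' ω'))‖ ^ 2 | 𝒢]) ω ≤
      L ^ 2 * ‖x ω - x' ω‖ ^ 2 := by
    have := h2
    nlinarith [h3]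
  have hdG : (0:ℝ) ≤ ‖d' ω - G (x' ω)‖ ^ 2 := sq_nonneg _
  have hxx : (0:ℝ) ≤ ‖x ω - x' ω‖ ^ 2 := sq_nonneg _
  have hL2 : (0:ℝ) ≤ L ^ 2 := sq_nonneg _
  rw [hA_norm]
  nlinarith [h4, hC_le, mul_nonneg hL2 hxx, sq_nonneg (1 - θ), hdG,
    mul_nonneg (mul_nonneg hθ0 (sub_nonneg.mpr hθ1)) hdG, mul_nonneg hθ0 hdG]
end

section
/- Let L > 0 and let (τ_k)_{k≥1} be a sequence of real numbers with τ_k ≥ 1/L for all k ≥ 1. Let (η_k)_{k≥0} be a sequence of positive reals satisfying, for every k ≥ 1: η_k = (1 + 1/τ_k)η_{k−1} if τ_k ≥ η_{k−1}; η_k = τ_k if η_{k−1}/2 < τ_k < η_{k−1}; and η_k = η_{k−1}/√2 if τ_k ≤ η_{k−1}/2. If η_i ≥ 1/(√2 L) for some index i ≥ 0, then η_k ≥ 1/(2L) for every k ≥ i. -/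
/-!
With `m = 1/L`, the level `m / √2` is invariant under the step-size rule: a growth step does
not decrease `η`, a truncation step sets `η` to `τ ≥ m`, and a shrinking step only happens
when `η ≥ 2τ ≥ 2m`, so it leaves `η ≥ √2 m`. Finally `1/(2L) ≤ 1/(√2 L)` since `√2 ≤ 2`.
-/

open Real

lemma le_stepsize_of_le_prev {m t a b : ℝ} (hm : 0 ≤ m) (ht : m ≤ t) (ha : m / √2 ≤ a)
    (hgrow : a ≤ t → b = (1 + 1 / t) * a)
    (htrunc : a / 2 < t → t < a → b = t)
    (hshrink : t ≤ a / 2 → b = a / √2) :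
    m / √2 ≤ b := by
  have hsqrt2 : 0 < √2 := by positivity
  have ha_nonneg : 0 ≤ a := (div_nonneg hm hsqrt2.le).trans ha
  rcases le_or_gt a t with hat | hta
  · rw [hgrow hat]
    have : 0 ≤ 1 / t * a := mul_nonneg (one_div_nonneg.mpr (hm.trans ht)) ha_nonneg
    linarith
  rcases le_or_gt t (a / 2) with hta2 | hta2
  · rw [hshrink hta2]
    gcongr
    linarith
  · rw [htrunc hta2 hta]
    exact (div_le_self hm (one_le_sqrt.mpr one_le_two)).trans ht

theorem stepsize_persistence_general
    (L : ℝ) (hL : 0 < L) (τ η : ℕ → ℝ)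
    (hτ : ∀ k, 1 ≤ k → 1 / L ≤ τ k)
    (hrec1 : ∀ k, 1 ≤ k → η (k - 1) ≤ τ k → η k = (1 + 1 / τ k) * η (k - 1))
    (hrec2 : ∀ k, 1 ≤ k → η (k - 1) / 2 < τ k → τ k < η (k - 1) → η k = τ k)
    (hrec3 : ∀ k, 1 ≤ k → τ k ≤ η (k - 1) / 2 → η k = η (k - 1) / Real.sqrt 2)
    (i : ℕ) (hi : 1 / (Real.sqrt 2 * L) ≤ η i) :
    ∀ k, i ≤ k → 1 / (2 * L) ≤ η k := by
  have hlevel : 1 / (√2 * L) = 1 / L / √2 := by rw [div_div, mul_comm]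
  have hinv : ∀ k, i ≤ k → 1 / L / √2 ≤ η k := by
    intro k hk
    induction k, hk using Nat.le_induction with
    | base => rwa [← hlevel]
    | succ n _ ih =>
      have hn : 1 ≤ n + 1 := Nat.le_add_left 1 n
      exact le_stepsize_of_le_prev (by positivity) (hτ _ hn) ih
        (hrec1 _ hn) (hrec2 _ hn) (hrec3 _ hn)
  intro k hk
  calc 1 / (2 * L) ≤ 1 / (√2 * L) := by
        gcongr
        exact sqrt_le_iff.mpr ⟨zero_le_two, by norm_num⟩
    _ = 1 / L / √2 := hlevel
    _ ≤ η k := hinv k hk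

/-- Step 2 of the proof of Lemma 3.18: persistence of the adaptive step-size lower bound.
If the step size reaches level `1/(√2 L)` at some index `i`, then all subsequent step
sizes stay above `1/(2L)`, provided the BB quantities satisfy `τ_k ≥ 1/L`. -/
theorem stepsize_persistence
    (L : ℝ) (hL : 0 < L) (τ η : ℕ → ℝ)
    (hτ : ∀ k, 1 ≤ k → 1 / L ≤ τ k)
    (hη_pos : ∀ k, 0 < η k)
    (hrec1 : ∀ k, 1 ≤ k → η (k - 1) ≤ τ k → η k = (1 + 1 / τ k) * η (k - 1))
    (hrec2 : ∀ k, 1 ≤ k → η (k - 1) / 2 < τ k → τ k < η (k - 1) → η k = τ k)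
    (hrec3 : ∀ k, 1 ≤ k → τ k ≤ η (k - 1) / 2 → η k = η (k - 1) / Real.sqrt 2)
    (i : ℕ) (hi : 1 / (Real.sqrt 2 * L) ≤ η i) :
    ∀ k, i ≤ k → 1 / (2 * L) ≤ η k :=
  stepsize_persistence_general L hL τ η hτ hrec1 hrec2 hrec3 i hi
end

section
/- Let L > 0 and let (τ_k)_{k≥1} be a sequence of real numbers with τ_k ≥ 1/L for all k ≥ 1. Let (η_k)_{k≥0} be a sequence of positive reals with η_0 ≥ 1/L satisfying, for every k ≥ 1: η_k = (1 + 1/τ_k)η_{k−1} if τ_k ≥ η_{k−1}; η_k = τ_k if η_{k−1}/2 < τ_k < η_{k−1}; and η_k = η_{k−1}/√2 if τ_k ≤ η_{k−1}/2. Then η_k ≥ 1/(2L) for every k ≥ 0. -/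
/-!
In each of the three branches of the update the new step size is at least `min η τ`:
the growth branch does not decrease `η`, the middle branch returns `τ`, and the shrinking
branch gives `η / √2 ≥ η / 2 ≥ τ`. By induction every step size is therefore at least
`min(η₀, inf τ) ≥ 1/L`, which is stronger than the claimed `1/(2L)`.
-/

/-- The step-size update of PSGA from `η` to `η'` driven by the BB quantity `τ`. -/
def IsStepsizeUpdate (η τ η' : ℝ) : Prop :=
  (η ≤ τ → η' = (1 + 1 / τ) * η) ∧
    (η / 2 < τ → τ < η → η' = τ) ∧
    (τ ≤ η / 2 → η' = η / Real.sqrt 2)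

theorem IsStepsizeUpdate.min_le {η τ η' : ℝ} (h : IsStepsizeUpdate η τ η') (hη : 0 ≤ η) :
    min η τ ≤ η' := by
  obtain ⟨hgrow, hkeep, hshrink⟩ := h
  rcases le_or_gt η τ with hητ | hτη
  · have hτ_inv : 0 ≤ 1 / τ := one_div_nonneg.mpr (hη.trans hητ)
    rw [hgrow hητ]
    nlinarith [min_le_left η τ]
  rcases lt_or_ge (η / 2) τ with hτ_half | hτ_half
  · rw [hkeep hτ_half hτη]
    exact min_le_right η τ
  · have hsqrt : η / 2 ≤ η / Real.sqrt 2 :=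
      div_le_div_of_nonneg_left hη (Real.sqrt_pos.mpr two_pos)
        (Real.sqrt_two_lt_three_halves.le.trans (by norm_num))
    rw [hshrink hτ_half]
    exact (min_le_right η τ).trans (hτ_half.trans hsqrt)

theorem le_stepsize_of_isStepsizeUpdate {τ η : ℕ → ℝ} {b : ℝ}
    (hupdate : ∀ k, IsStepsizeUpdate (η k) (τ (k + 1)) (η (k + 1)))
    (hb : 0 ≤ b) (hη0 : b ≤ η 0) (hτ : ∀ k, b ≤ τ (k + 1)) :
    ∀ k, b ≤ η k
  | 0 => hη0
  | k + 1 =>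
    have ih := le_stepsize_of_isStepsizeUpdate hupdate hb hη0 hτ k
    (le_min ih (hτ k)).trans ((hupdate k).min_le (hb.trans ih))

theorem stepsize_lower_bound_general
    (L : ℝ) (hL : 0 < L) (τ η : ℕ → ℝ)
    (hτ : ∀ k, 1 ≤ k → 1 / L ≤ τ k)
    (hη0 : 1 / L ≤ η 0)
    (hrec1 : ∀ k, 1 ≤ k → η (k - 1) ≤ τ k → η k = (1 + 1 / τ k) * η (k - 1))
    (hrec2 : ∀ k, 1 ≤ k → η (k - 1) / 2 < τ k → τ k < η (k - 1) → η k = τ k)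
    (hrec3 : ∀ k, 1 ≤ k → τ k ≤ η (k - 1) / 2 → η k = η (k - 1) / Real.sqrt 2) :
    ∀ k, 1 / (2 * L) ≤ η k := by
  have hupdate : ∀ k, IsStepsizeUpdate (η k) (τ (k + 1)) (η (k + 1)) := fun k =>
    ⟨hrec1 (k + 1) k.succ_pos, hrec2 (k + 1) k.succ_pos, hrec3 (k + 1) k.succ_pos⟩
  have hinv_le : 1 / (2 * L) ≤ 1 / L :=
    one_div_le_one_div_of_le hL (by linarith)
  intro k
  exact hinv_le.trans <| le_stepsize_of_isStepsizeUpdate hupdate (by positivity) hη0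
    (fun j => hτ (j + 1) j.succ_pos) k

/-- Lemma 3.18 of the paper (deterministic version): the adaptive step-size recursion of
PSGA, initialized with `η_0 ≥ 1/L` and driven by BB quantities `τ_k ≥ 1/L`, keeps all
step sizes bounded below by `1/(2L)`. -/
theorem stepsize_lower_bound
    (L : ℝ) (hL : 0 < L) (τ η : ℕ → ℝ)
    (hτ : ∀ k, 1 ≤ k → 1 / L ≤ τ k)
    (hη_pos : ∀ k, 0 < η k)
    (hη0 : 1 / L ≤ η 0)
    (hrec1 : ∀ k, 1 ≤ k → η (k - 1) ≤ τ k → η k = (1 + 1 / τ k) * η (k - 1))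
    (hrec2 : ∀ k, 1 ≤ k → η (k - 1) / 2 < τ k → τ k < η (k - 1) → η k = τ k)
    (hrec3 : ∀ k, 1 ≤ k → τ k ≤ η (k - 1) / 2 → η k = η (k - 1) / Real.sqrt 2) :
    ∀ k, 1 / (2 * L) ≤ η k :=
  stepsize_lower_bound_general L hL τ η hτ hη0 hrec1 hrec2 hrec3
end

section
/- Let d ∈ ℕ, L > 0, let f : ℝ^d → ℝ be differentiable with L-Lipschitz gradient (‖∇f(u) − ∇f(v)‖ ≤ L‖u − v‖ for all u, v), let r : ℝ^d → ℝ be convex, and set F = f + r. Let x ∈ ℝ^d, let D : ℝ^d → ℝ satisfy D(x) = r(x) and D(u) ≥ r(u) for all u ∈ ℝ^d, let g ∈ ℝ^d, η > 0, and let y ∈ ℝ^d be a minimizer over ℝ^d of u ↦ D(u) + (1/(2η))‖u − (x − ηg)‖². Let λ ∈ (0, 1] and x⁺ = x + λ(y − x). Then F(x⁺) + (1/(2λη) − L/2)‖x⁺ − x‖² ≤ F(x) + ⟨∇f(x) − g, x⁺ − x⟩. -/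
open RealInnerProductSpace

lemma descent_lemma {d : ℕ} {L : ℝ} (hL : 0 ≤ L)
    (f : EuclideanSpace ℝ (Fin d) → ℝ) (hf : Differentiable ℝ f)
    (hlip : ∀ u v : EuclideanSpace ℝ (Fin d),
      ‖gradient f u - gradient f v‖ ≤ L * ‖u - v‖)
    (a b : EuclideanSpace ℝ (Fin d)) :
    f b ≤ f a + ⟪gradient f a, b - a⟫ + L / 2 * ‖b - a‖ ^ 2 := by
  set v := b - a with hv
  -- gradient is continuous
  have hgradcont : Continuous (gradient f) := by
    refine (LipschitzWith.of_dist_le_mul (K := L.toNNReal) ?_).continuous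
    intro u w
    simpa [dist_eq_norm, Real.coe_toNNReal L hL] using hlip u w
  have hc : ∀ t : ℝ, HasDerivAt (fun t : ℝ => a + t • v) v t := by
    intro t
    simpa using ((hasDerivAt_id t).smul_const v).const_add a
  have hφ : ∀ t : ℝ, HasDerivAt (fun t : ℝ => f (a + t • v))
      (⟪gradient f (a + t • v), v⟫) t := by
    intro t
    have := ((hf _).hasGradientAt.hasFDerivAt).comp_hasDerivAt t (hc t)
    simpa [InnerProductSpace.toDual_apply_apply, Function.comp_def] using this
  have hcont : Continuous (fun t : ℝ => (⟪gradient f (a + t • v), v⟫ : ℝ)) := by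
    exact (hgradcont.comp (continuous_const.add (continuous_id.smul continuous_const))).inner
      continuous_const
  have hint : ∫ t in (0:ℝ)..1, (⟪gradient f (a + t • v), v⟫ : ℝ) = f (a + (1:ℝ) • v) - f (a + (0:ℝ) • v) :=
    intervalIntegral.integral_eq_sub_of_hasDerivAt (fun t _ => hφ t)
      (hcont.intervalIntegrable 0 1)
  have hab : f b - f a = ∫ t in (0:ℝ)..1, (⟪gradient f (a + t • v), v⟫ : ℝ) := by
    rw [hint]; simp [hv]
  have hmono : ∫ t in (0:ℝ)..1, (⟪gradient f (a + t • v), v⟫ : ℝ)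
      ≤ ∫ t in (0:ℝ)..1, (⟪gradient f a, v⟫ + L * t * ‖v‖ ^ 2) := by
    refine intervalIntegral.integral_mono_on (by norm_num) (hcont.intervalIntegrable 0 1)
      ((by fun_prop : Continuous fun t : ℝ => (⟪gradient f a, v⟫ : ℝ) + L * t * ‖v‖ ^ 2).intervalIntegrable 0 1) ?_
    intro t ht
    have h1 : (⟪gradient f (a + t • v), v⟫ : ℝ) - ⟪gradient f a, v⟫
        = ⟪gradient f (a + t • v) - gradient f a, v⟫ := by
      rw [inner_sub_left]
    have h2 : (⟪gradient f (a + t • v) - gradient f a, v⟫ : ℝ)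
        ≤ ‖gradient f (a + t • v) - gradient f a‖ * ‖v‖ := real_inner_le_norm _ _
    have h3 : ‖gradient f (a + t • v) - gradient f a‖ ≤ L * (t * ‖v‖) := by
      have := hlip (a + t • v) a
      simpa [norm_smul, abs_of_nonneg ht.1] using this
    have h4 : ‖gradient f (a + t • v) - gradient f a‖ * ‖v‖ ≤ L * (t * ‖v‖) * ‖v‖ :=
      mul_le_mul_of_nonneg_right h3 (norm_nonneg v)
    nlinarith [norm_nonneg v]
  have hval : ∫ t in (0:ℝ)..1, ((⟪gradient f a, v⟫ : ℝ) + L * t * ‖v‖ ^ 2)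
      = ⟪gradient f a, v⟫ + L / 2 * ‖v‖ ^ 2 := by
    rw [intervalIntegral.integral_add (intervalIntegrable_const)
      ((by fun_prop : Continuous fun t : ℝ => L * t * ‖v‖ ^ 2).intervalIntegrable 0 1)]
    have : ∫ t in (0:ℝ)..1, L * t * ‖v‖ ^ 2 = L / 2 * ‖v‖ ^ 2 := by
      have : (fun t : ℝ => L * t * ‖v‖ ^ 2) = fun t : ℝ => (L * ‖v‖ ^ 2) * t := by
        funext t; ring
      rw [this, intervalIntegral.integral_const_mul, integral_id]
      ring
    rw [this]; simp
  have := hab ▸ (hval ▸ hmono)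
  linarith [hmono, hval ▸ hmono, hab]

/-- Inequality (3.7) of the paper: per-iteration sufficient decrease for one PSGA step,
where `y` is the proximal step `prox_{ηD}(x − ηg)` for a surrogate `D` of `r` at `x`,
and `x⁺ = x + λ(y − x)` with relaxation `λ ∈ (0,1]`. -/
theorem psga_sufficient_decrease
    (d : ℕ) (L : ℝ) (hL : 0 < L)
    (f : EuclideanSpace ℝ (Fin d) → ℝ) (hf : Differentiable ℝ f)
    (hlip : ∀ u v : EuclideanSpace ℝ (Fin d),
      ‖gradient f u - gradient f v‖ ≤ L * ‖u - v‖)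
    (r : EuclideanSpace ℝ (Fin d) → ℝ) (hr : ConvexOn ℝ Set.univ r)
    (F : EuclideanSpace ℝ (Fin d) → ℝ) (hF : F = fun z => f z + r z)
    (x : EuclideanSpace ℝ (Fin d))
    (D : EuclideanSpace ℝ (Fin d) → ℝ)
    (hDx : D x = r x) (hD : ∀ u, r u ≤ D u)
    (g : EuclideanSpace ℝ (Fin d)) (η : ℝ) (hη : 0 < η)
    (y : EuclideanSpace ℝ (Fin d))
    (hy : ∀ u : EuclideanSpace ℝ (Fin d),
      D y + (1 / (2 * η)) * ‖y - (x - η • g)‖ ^ 2 ≤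
        D u + (1 / (2 * η)) * ‖u - (x - η • g)‖ ^ 2)
    (lam : ℝ) (hlam : lam ∈ Set.Ioc (0 : ℝ) 1)
    (xp : EuclideanSpace ℝ (Fin d)) (hxp : xp = x + lam • (y - x)) :
    F xp + (1 / (2 * lam * η) - L / 2) * ‖xp - x‖ ^ 2 ≤
      F x + ⟪gradient f x - g, xp - x⟫ := by
  obtain ⟨hlam0, hlam1⟩ := hlam
  have hxpx : xp - x = lam • (y - x) := by rw [hxp]; abel
  have hnxp : ‖xp - x‖ ^ 2 = lam ^ 2 * ‖y - x‖ ^ 2 := by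
    rw [hxpx, norm_smul, Real.norm_eq_abs, abs_of_pos hlam0]
    ring
  -- three point / prox inequality at u = x
  have hprox : D y ≤ r x - (1 / (2 * η)) * ‖y - x‖ ^ 2 - ⟪g, y - x⟫ := by
    have h := hy x
    have e1 : x - (x - η • g) = η • g := by abel
    have e2 : y - (x - η • g) = (y - x) + η • g := by abel
    rw [e1, e2, hDx] at h
    have e3 : ‖(y - x) + η • g‖ ^ 2 = ‖y - x‖ ^ 2 + 2 * (η * ⟪g, y - x⟫) + η ^ 2 * ‖g‖ ^ 2 := by
      rw [norm_add_sq_real, norm_smul, inner_smul_right, real_inner_comm, Real.norm_eq_abs,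
        abs_of_pos hη]
      ring
    have e4 : ‖η • g‖ ^ 2 = η ^ 2 * ‖g‖ ^ 2 := by
      rw [norm_smul, Real.norm_eq_abs, abs_of_pos hη]; ring
    rw [e3, e4] at h
    have hη' : η ≠ 0 := ne_of_gt hη
    have hc : (1 / (2 * η)) * (‖y - x‖ ^ 2 + 2 * (η * ⟪g, y - x⟫) + η ^ 2 * ‖g‖ ^ 2)
        = (1 / (2 * η)) * ‖y - x‖ ^ 2 + ⟪g, y - x⟫ + (1 / (2 * η)) * (η ^ 2 * ‖g‖ ^ 2) := by
      field_simp
    linarith [h, hc.symm.le, hc.le]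
  -- convexity of r
  have hrxp : r xp ≤ (1 - lam) * r x + lam * r y := by
    have h := hr.2 (Set.mem_univ x) (Set.mem_univ y) (by linarith : (0:ℝ) ≤ 1 - lam)
      (le_of_lt hlam0) (by ring)
    have e : (1 - lam) • x + lam • y = xp := by
      rw [hxp, smul_sub, sub_smul, one_smul]; abel
    rw [e] at h
    simpa [smul_eq_mul] using h
  -- descent lemma
  have hdesc : f xp ≤ f x + ⟪gradient f x, xp - x⟫ + L / 2 * ‖xp - x‖ ^ 2 :=
    descent_lemma (le_of_lt hL) f hf hlip x xp
  have hgin : (⟪g, xp - x⟫ : ℝ) = lam * ⟪g, y - x⟫ := by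
    rw [hxpx, inner_smul_right]
  have hry : r y ≤ r x - (1 / (2 * η)) * ‖y - x‖ ^ 2 - ⟪g, y - x⟫ :=
    le_trans (hD y) hprox
  have hinner : (⟪gradient f x - g, xp - x⟫ : ℝ) = ⟪gradient f x, xp - x⟫ - ⟪g, xp - x⟫ := by
    rw [inner_sub_left]
  simp only [hF]
  rw [hinner, hgin, hnxp]
  have hA : (0:ℝ) ≤ ‖y - x‖ ^ 2 := sq_nonneg _
  have key : (1 / (2 * lam * η) - L / 2) * (lam ^ 2 * ‖y - x‖ ^ 2)
      = lam / (2 * η) * ‖y - x‖ ^ 2 - L / 2 * (lam ^ 2 * ‖y - x‖ ^ 2) := by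
    field_simp
  have hrxp2 : r xp ≤ r x - lam / (2 * η) * ‖y - x‖ ^ 2 - lam * ⟪g, y - x⟫ := by
    have h1 := mul_le_mul_of_nonneg_left hry (le_of_lt hlam0)
    have e5 : lam * (r x - 1 / (2 * η) * ‖y - x‖ ^ 2 - ⟪g, y - x⟫)
        = lam * r x - lam / (2 * η) * ‖y - x‖ ^ 2 - lam * ⟪g, y - x⟫ := by
      field_simp
    rw [e5] at h1
    linarith [hrxp, h1]
  have hdesc2 : f xp ≤ f x + ⟪gradient f x, xp - x⟫ + L / 2 * (lam ^ 2 * ‖y - x‖ ^ 2) := by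
    rw [hnxp] at hdesc; exact hdesc
  linarith [key, hrxp2, hdesc2]
end

section
/- Let d ∈ ℕ, let F : ℝ^d → ℝ be convex, let x* ∈ ℝ^d, L ≥ 0, and let c : ℝ^d → ℝ satisfy c(x*) = 0 and be (Fréchet) differentiable at x* with derivative 0. If F(x*) ≤ F(x) + c(x) + (L/2)‖x − x*‖² for all x ∈ ℝ^d, then F(x*) ≤ F(x) for all x ∈ ℝ^d; that is, x* is a global minimizer of F. -/
/-- Concluding argument of Theorem 3.15: if a convex function `F` satisfies
`F(x*) ≤ F(x) + c(x) + (L/2)‖x − x*‖²` for all `x`, where the perturbation `c`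
vanishes at `x*` together with its derivative, then `x*` is a global minimizer of `F`. -/
theorem perturbed_minimizer_is_global
    (d : ℕ) (F : EuclideanSpace ℝ (Fin d) → ℝ) (hF : ConvexOn ℝ Set.univ F)
    (xs : EuclideanSpace ℝ (Fin d)) (L : ℝ) (hL : 0 ≤ L)
    (c : EuclideanSpace ℝ (Fin d) → ℝ)
    (hc0 : c xs = 0)
    (hcderiv : HasFDerivAt c (0 : EuclideanSpace ℝ (Fin d) →L[ℝ] ℝ) xs)
    (hmin : ∀ x, F xs ≤ F x + c x + (L / 2) * ‖x - xs‖ ^ 2) :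
    ∀ x, F xs ≤ F x := by
  intro x
  set v := x - xs with hv
  set g : ℝ → EuclideanSpace ℝ (Fin d) := fun t => xs + t • v with hg
  -- derivative of t ↦ c (g t) at 0 is 0
  have hline : HasDerivAt g v 0 := by
    have : HasDerivAt (fun t : ℝ => t • v) ((1:ℝ) • v) 0 := (hasDerivAt_id 0).smul_const v
    simpa only [one_smul] using (this.const_add xs)
  have hg0 : g 0 = xs := by simp [hg]
  have hcg : HasDerivAt (fun t => c (g t)) 0 0 := by
    have hcs : HasFDerivAt c (0 : EuclideanSpace ℝ (Fin d) →L[ℝ] ℝ) (g 0) := hg0.symm ▸ hcderiv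
    have := hcs.comp_hasDerivAt 0 hline
    simp only [ContinuousLinearMap.zero_apply] at this
    exact this
  have hslope : Filter.Tendsto (fun t : ℝ => c (g t) / t) (nhdsWithin 0 (Set.Ioi 0)) (nhds 0) := by
    have h1 := hasDerivAt_iff_tendsto_slope.mp hcg
    have h2 : Filter.Tendsto (slope (fun t => c (g t)) 0) (nhdsWithin 0 (Set.Ioi 0)) (nhds 0) :=
      h1.mono_left (nhdsWithin_mono 0 (fun t ht => ne_of_gt ht))
    refine h2.congr (fun t => ?_)
    simp [slope, hg0, hc0, div_eq_inv_mul]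
  have hquad : Filter.Tendsto (fun t : ℝ => (L / 2) * t * ‖v‖ ^ 2)
      (nhdsWithin 0 (Set.Ioi 0)) (nhds 0) := by
    have : Filter.Tendsto (fun t : ℝ => (L / 2) * t * ‖v‖ ^ 2) (nhds 0) (nhds 0) := by
      have := (Filter.tendsto_id (x := nhds (0:ℝ))).const_mul (L / 2) |>.mul_const (‖v‖ ^ 2)
      simpa using this
    exact this.mono_left nhdsWithin_le_nhds
  have hφ : Filter.Tendsto (fun t : ℝ => c (g t) / t + (L / 2) * t * ‖v‖ ^ 2)
      (nhdsWithin 0 (Set.Ioi 0)) (nhds 0) := by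
    simpa using hslope.add hquad
  have key : F xs - F x ≤ 0 := by
    refine ge_of_tendsto hφ ?_
    filter_upwards [Ioo_mem_nhdsGT_of_mem (Set.mem_Ico.mpr ⟨le_rfl, one_pos⟩)] with t ht
    obtain ⟨ht0, ht1⟩ := ht
    -- convexity: F (g t) ≤ (1-t) F xs + t F x
    have hconv : F (g t) ≤ (1 - t) * F xs + t * F x := by
      have hx : g t = (1 - t) • xs + t • x := by
        simp [hg, hv, smul_sub, sub_smul]
        module
      have := hF.2 (Set.mem_univ xs) (Set.mem_univ x) (by linarith : (0:ℝ) ≤ 1 - t)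
        ht0.le (by ring)
      simpa [hx, smul_eq_mul] using this
    have hnorm : ‖g t - xs‖ = t * ‖v‖ := by
      have : g t - xs = t • v := by simp [hg]
      rw [this, norm_smul, Real.norm_eq_abs, abs_of_pos ht0]
    have h := hmin (g t)
    rw [hnorm] at h
    have h' : t * (F xs - F x) ≤ c (g t) + (L / 2) * t ^ 2 * ‖v‖ ^ 2 := by nlinarith
    calc F xs - F x = t * (F xs - F x) / t := by field_simp
      _ ≤ (c (g t) + (L / 2) * t ^ 2 * ‖v‖ ^ 2) / t := by
          exact div_le_div_of_nonneg_right h' ht0.le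
      _ = c (g t) / t + (L / 2) * t * ‖v‖ ^ 2 := by field_simp
  linarith
end
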